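/- (Coproduct and counit are well defined on M_{ℓ,p}.) (1) Let A and B be unital associative k-algebras, and suppose M : {0,1,2,3}×{0,1,2,3} → A and N : {0,1,2,3}×{0,1,2,3} → B both satisfy the M_{ℓ,p}-relations. Then the family P_{μν} := Σ_{α=0}^{3} M_{μα} ⊗ N_{αν} of elements of the k-algebra A ⊗_k B also satisfies the M_{ℓ,p}-relations. (2) The scalar family E_{μν} := δ_{μν}·1 in k satisfies the M_{ℓ,p}-relations. -/
import Mathlib


/-- For distinct `μ ν`, `pr μ ν = (μ', ν')`, the unique pair with
`{μ', ν'} = {0,1,2,3} \ {μ, ν}` and `μ' > ν'` iff `μ > ν`; `pr μ μ = (μ, μ)`. -/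
def pr : Fin 4 → Fin 4 → Fin 4 × Fin 4 :=
  ![![(0,0),(2,3),(1,3),(1,2)],
    ![(3,2),(1,1),(0,3),(0,2)],
    ![(3,1),(3,0),(2,2),(0,1)],
    ![(2,1),(2,0),(1,0),(3,3)]]

/-- The table `ν ↦ (ν̃, μ_ν, μ̃_ν)`. -/
def tnu : Fin 4 → Fin 4 × Fin 4 × Fin 4 :=
  ![(1,2,3),(0,3,2),(3,0,1),(2,1,0)]

/-- The conditions on the parameters `ℓ_{μν}`, `p_{μν}` of Definition 2.1. -/
def GoodParams {k : Type*} [Field k] (ℓ p : Fin 4 → Fin 4 → k) : Prop :=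
  (∀ μ : Fin 4, ℓ μ μ = 1) ∧
  (∀ μ ν : Fin 4, ℓ μ ν = ℓ ν μ) ∧
  (∀ μ ν : Fin 4, ℓ (pr μ ν).1 (pr μ ν).2 = ℓ μ ν) ∧
  (∀ μ ν : Fin 4, p μ ν = - p ν μ) ∧
  (∀ μ ν : Fin 4, ℓ μ ν ^ 2 + p μ ν * p (pr μ ν).2 (pr μ ν).1 = 1)

/-- `x` satisfies the `A_{ℓ,p}`-relations: `x_μ x_ν = ℓ_{μν} x_ν x_μ + p_{μν} x_{ν'} x_{μ'}`. -/
def AlpRel {k A : Type*} [Field k] [Ring A] [Algebra k A]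
    (ℓ p : Fin 4 → Fin 4 → k) (x : Fin 4 → A) : Prop :=
  ∀ μ ν : Fin 4,
    x μ * x ν = ℓ μ ν • (x ν * x μ) + p μ ν • (x (pr μ ν).2 * x (pr μ ν).1)

/-- `M` satisfies the `M_{ℓ,p}`-relations:
`M_{μα} M_{νβ} = ℓ_{μν} ℓ_{βα} M_{νβ} M_{μα} + p_{μν} ℓ_{βα} M_{ν'β} M_{μ'α}
+ ℓ_{μν} p_{β'α'} M_{νβ'} M_{μα'} + p_{μν} p_{β'α'} M_{ν'β'} M_{μ'α'}`. -/
def MlpRel {k A : Type*} [Field k] [Ring A] [Algebra k A]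
    (ℓ p : Fin 4 → Fin 4 → k) (M : Fin 4 → Fin 4 → A) : Prop :=
  ∀ μ ν α β : Fin 4,
    M μ α * M ν β =
      (ℓ μ ν * ℓ β α) • (M ν β * M μ α) +
      (p μ ν * ℓ β α) • (M (pr μ ν).2 β * M (pr μ ν).1 α) +
      (ℓ μ ν * p (pr α β).2 (pr α β).1) • (M ν (pr α β).2 * M μ (pr α β).1) +
      (p μ ν * p (pr α β).2 (pr α β).1) •
        (M (pr μ ν).2 (pr α β).2 * M (pr μ ν).1 (pr α β).1)

open scoped TensorProduct

section Aux

set_option maxHeartbeats 2000000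

lemma pr_pr : ∀ γ δ : Fin 4, pr (pr γ δ).1 (pr γ δ).2 = (γ, δ) := by decide

lemma pr_swap : ∀ μ ν : Fin 4, pr ν μ = ((pr μ ν).2, (pr μ ν).1) := by decide

lemma lemB {k A : Type*} [Field k] [Ring A] [Algebra k A]
    (ℓ p : Fin 4 → Fin 4 → k) (hlp : GoodParams ℓ p)
    (N : Fin 4 → Fin 4 → A) (hN : MlpRel ℓ p N) (γ δ α β : Fin 4) :
    ℓ δ γ • (N γ α * N δ β) + p δ γ • (N (pr γ δ).1 α * N (pr γ δ).2 β)
      = ℓ β α • (N δ β * N γ α)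
        + p (pr α β).2 (pr α β).1 • (N δ (pr α β).2 * N γ (pr α β).1) := by
  obtain ⟨h1, hsym, hprl, hanti, hunit⟩ := hlp
  have l1 : ℓ (pr γ δ).1 (pr γ δ).2 = ℓ δ γ := by rw [hprl, hsym]
  have l2 : ℓ γ δ = ℓ δ γ := hsym γ δ
  have pa : p γ δ = -p δ γ := hanti γ δ
  have hu : ℓ δ γ ^ 2 + p δ γ * p (pr γ δ).1 (pr γ δ).2 = 1 := by
    have := hunit δ γ
    rwa [pr_swap γ δ] at this
  rw [hN γ δ α β, hN (pr γ δ).1 (pr γ δ).2 α β]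
  simp only [pr_pr, l1, l2, pa]
  match_scalars
  · linear_combination ℓ β α * hu
  · ring
  · linear_combination p (pr α β).2 (pr α β).1 * hu
  · ring


lemma pr_pr' : ∀ x : Fin 4 × Fin 4, pr (pr x.1 x.2).1 (pr x.1 x.2).2 = x := by decide

def prEquiv : (Fin 4 × Fin 4) ≃ (Fin 4 × Fin 4) where
  toFun x := pr x.1 x.2
  invFun x := pr x.1 x.2
  left_inv x := pr_pr' x
  right_inv x := pr_pr' x

lemma keyC {k A B : Type*} [Field k] [Ring A] [Algebra k A] [Ring B] [Algebra k B]
    (ℓ p : Fin 4 → Fin 4 → k) (hlp : GoodParams ℓ p)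
    (G : Fin 4 → Fin 4 → A) (N : Fin 4 → Fin 4 → B) (hN : MlpRel ℓ p N) (α β : Fin 4) :
    (∑ γ : Fin 4, ∑ δ : Fin 4,
      ((ℓ δ γ • G γ δ) ⊗ₜ[k] (N γ α * N δ β) +
       (p (pr γ δ).2 (pr γ δ).1 • G (pr γ δ).1 (pr γ δ).2) ⊗ₜ[k] (N γ α * N δ β)))
    = ℓ β α • ∑ γ : Fin 4, ∑ δ : Fin 4, G γ δ ⊗ₜ[k] (N δ β * N γ α)
      + p (pr α β).2 (pr α β).1 •
          ∑ γ : Fin 4, ∑ δ : Fin 4, G γ δ ⊗ₜ[k] (N δ (pr α β).2 * N γ (pr α β).1) := by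
  have step1 : (∑ γ : Fin 4, ∑ δ : Fin 4,
      (p (pr γ δ).2 (pr γ δ).1 • G (pr γ δ).1 (pr γ δ).2) ⊗ₜ[k] (N γ α * N δ β))
      = ∑ γ : Fin 4, ∑ δ : Fin 4,
        (p δ γ • G γ δ) ⊗ₜ[k] (N (pr γ δ).1 α * N (pr γ δ).2 β) := by
    rw [← Finset.sum_product', ← Finset.sum_product']
    refine (Fintype.sum_equiv prEquiv _ _ ?_).symm
    intro x
    simp only [prEquiv, Equiv.coe_fn_mk, pr_pr' x]
  simp only [Finset.sum_add_distrib]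
  rw [step1, ← Finset.sum_add_distrib]
  conv_lhs => rw [Finset.sum_congr rfl (fun γ _ => (Finset.sum_add_distrib).symm)]
  have step2 : ∀ γ δ : Fin 4,
      (ℓ δ γ • G γ δ) ⊗ₜ[k] (N γ α * N δ β) +
        (p δ γ • G γ δ) ⊗ₜ[k] (N (pr γ δ).1 α * N (pr γ δ).2 β)
      = ℓ β α • (G γ δ ⊗ₜ[k] (N δ β * N γ α)) +
        p (pr α β).2 (pr α β).1 • (G γ δ ⊗ₜ[k] (N δ (pr α β).2 * N γ (pr α β).1)) := by
    intro γ δ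
    rw [TensorProduct.smul_tmul, TensorProduct.smul_tmul, ← TensorProduct.tmul_add,
      lemB ℓ p hlp N hN γ δ α β, TensorProduct.tmul_add, TensorProduct.tmul_smul,
      TensorProduct.tmul_smul]
  rw [Finset.sum_congr rfl (fun γ _ => Finset.sum_congr rfl (fun δ _ => step2 γ δ))]
  simp only [Finset.sum_add_distrib, Finset.smul_sum]

lemma part1 {k A B : Type*} [Field k] [Ring A] [Algebra k A] [Ring B] [Algebra k B]
    (ℓ p : Fin 4 → Fin 4 → k) (hlp : GoodParams ℓ p)
    (M : Fin 4 → Fin 4 → A) (N : Fin 4 → Fin 4 → B)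
    (hM : MlpRel ℓ p M) (hN : MlpRel ℓ p N) :
    MlpRel ℓ p (fun μ ν => ∑ α : Fin 4, M μ α ⊗ₜ[k] N α ν) := by
  intro μ ν α β
  have expand : ∀ a b c d : Fin 4,
      (∑ γ : Fin 4, M a γ ⊗ₜ[k] N γ c) * (∑ γ : Fin 4, M b γ ⊗ₜ[k] N γ d)
      = ∑ γ : Fin 4, ∑ δ : Fin 4, (M a γ * M b δ) ⊗ₜ[k] (N γ c * N δ d) := by
    intro a b c d
    rw [Finset.sum_mul_sum]
    simp only [Algebra.TensorProduct.tmul_mul_tmul]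
  simp only []
  rw [expand μ ν α β, expand ν μ β α, expand (pr μ ν).2 (pr μ ν).1 β α,
    expand ν μ (pr α β).2 (pr α β).1,
    expand (pr μ ν).2 (pr μ ν).1 (pr α β).2 (pr α β).1]
  have h1 := keyC ℓ p hlp (fun γ δ => M ν δ * M μ γ) N hN α β
  have h2 := keyC ℓ p hlp (fun γ δ => M (pr μ ν).2 δ * M (pr μ ν).1 γ) N hN α β
  beta_reduce at h1 h2
  have step : (∑ γ : Fin 4, ∑ δ : Fin 4, (M μ γ * M ν δ) ⊗ₜ[k] (N γ α * N δ β))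
      = ℓ μ ν • (∑ γ : Fin 4, ∑ δ : Fin 4,
          ((ℓ δ γ • (M ν δ * M μ γ)) ⊗ₜ[k] (N γ α * N δ β) +
           (p (pr γ δ).2 (pr γ δ).1 • (M ν (pr γ δ).2 * M μ (pr γ δ).1)) ⊗ₜ[k]
             (N γ α * N δ β)))
      + p μ ν • (∑ γ : Fin 4, ∑ δ : Fin 4,
          ((ℓ δ γ • (M (pr μ ν).2 δ * M (pr μ ν).1 γ)) ⊗ₜ[k] (N γ α * N δ β) +
           (p (pr γ δ).2 (pr γ δ).1 •
             (M (pr μ ν).2 (pr γ δ).2 * M (pr μ ν).1 (pr γ δ).1)) ⊗ₜ[k]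
             (N γ α * N δ β))) := by
    simp only [Finset.smul_sum]
    rw [← Finset.sum_add_distrib]
    refine Finset.sum_congr rfl fun γ _ => ?_
    rw [← Finset.sum_add_distrib]
    refine Finset.sum_congr rfl fun δ _ => ?_
    rw [hM μ ν γ δ]
    simp only [TensorProduct.add_tmul, ← TensorProduct.smul_tmul', smul_smul]
    module
  rw [step, h1, h2]
  have e1 : (∑ γ : Fin 4, ∑ δ : Fin 4, (M ν δ * M μ γ) ⊗ₜ[k] (N δ β * N γ α))
      = ∑ γ : Fin 4, ∑ δ : Fin 4, (M ν γ * M μ δ) ⊗ₜ[k] (N γ β * N δ α) :=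
    Finset.sum_comm
  have e2 : (∑ γ : Fin 4, ∑ δ : Fin 4,
        (M ν δ * M μ γ) ⊗ₜ[k] (N δ (pr α β).2 * N γ (pr α β).1))
      = ∑ γ : Fin 4, ∑ δ : Fin 4,
        (M ν γ * M μ δ) ⊗ₜ[k] (N γ (pr α β).2 * N δ (pr α β).1) :=
    Finset.sum_comm
  have e3 : (∑ γ : Fin 4, ∑ δ : Fin 4,
        (M (pr μ ν).2 δ * M (pr μ ν).1 γ) ⊗ₜ[k] (N δ β * N γ α))
      = ∑ γ : Fin 4, ∑ δ : Fin 4,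
        (M (pr μ ν).2 γ * M (pr μ ν).1 δ) ⊗ₜ[k] (N γ β * N δ α) :=
    Finset.sum_comm
  have e4 : (∑ γ : Fin 4, ∑ δ : Fin 4,
        (M (pr μ ν).2 δ * M (pr μ ν).1 γ) ⊗ₜ[k] (N δ (pr α β).2 * N γ (pr α β).1))
      = ∑ γ : Fin 4, ∑ δ : Fin 4,
        (M (pr μ ν).2 γ * M (pr μ ν).1 δ) ⊗ₜ[k] (N γ (pr α β).2 * N δ (pr α β).1) :=
    Finset.sum_comm
  rw [e1, e2, e3, e4]
  module


lemma pr00 : pr 0 0 = (0,0) := rfl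
lemma pr01 : pr 0 1 = (2,3) := rfl
lemma pr02 : pr 0 2 = (1,3) := rfl
lemma pr03 : pr 0 3 = (1,2) := rfl
lemma pr10 : pr 1 0 = (3,2) := rfl
lemma pr11 : pr 1 1 = (1,1) := rfl
lemma pr12 : pr 1 2 = (0,3) := rfl
lemma pr13 : pr 1 3 = (0,2) := rfl
lemma pr20 : pr 2 0 = (3,1) := rfl
lemma pr21 : pr 2 1 = (3,0) := rfl
lemma pr22 : pr 2 2 = (2,2) := rfl
lemma pr23 : pr 2 3 = (0,1) := rfl
lemma pr30 : pr 3 0 = (2,1) := rfl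
lemma pr31 : pr 3 1 = (2,0) := rfl
lemma pr32 : pr 3 2 = (1,0) := rfl
lemma pr33 : pr 3 3 = (3,3) := rfl

lemma part2 {k : Type*} [Field k] [CharZero k]
    (ℓ p : Fin 4 → Fin 4 → k) (hlp : GoodParams ℓ p) :
    MlpRel ℓ p (fun μ ν : Fin 4 => if μ = ν then (1 : k) else 0) := by
  obtain ⟨h1, hsym, hprl, hanti, hunit⟩ := hlp
  have pii : ∀ i : Fin 4, p i i = 0 := fun i => by
    have := hanti i i; linear_combination this / 2
  have p10 : p 1 0 = -p 0 1 := hanti 1 0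
  have p20 : p 2 0 = -p 0 2 := hanti 2 0
  have p30 : p 3 0 = -p 0 3 := hanti 3 0
  have p21 : p 2 1 = -p 1 2 := hanti 2 1
  have p31 : p 3 1 = -p 1 3 := hanti 3 1
  have p32 : p 3 2 = -p 2 3 := hanti 3 2
  have l10 : ℓ 1 0 = ℓ 0 1 := hsym 1 0
  have l20 : ℓ 2 0 = ℓ 0 2 := hsym 2 0
  have l30 : ℓ 3 0 = ℓ 0 3 := hsym 3 0
  have l21 : ℓ 2 1 = ℓ 1 2 := hsym 2 1
  have l31 : ℓ 3 1 = ℓ 1 3 := hsym 3 1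
  have l32 : ℓ 3 2 = ℓ 2 3 := hsym 3 2
  have l23 : ℓ 2 3 = ℓ 0 1 := by have := hprl 0 1; rwa [pr01] at this
  have l13 : ℓ 1 3 = ℓ 0 2 := by have := hprl 0 2; rwa [pr02] at this
  have l12 : ℓ 1 2 = ℓ 0 3 := by have := hprl 0 3; rwa [pr03] at this
  have l00 : ℓ 0 0 = 1 := h1 0
  have l11 : ℓ 1 1 = 1 := h1 1
  have l22 : ℓ 2 2 = 1 := h1 2
  have l33 : ℓ 3 3 = 1 := h1 3
  have u1 : ℓ 0 1 ^ 2 - p 0 1 * p 2 3 = 1 := by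
    have := hunit 0 1; rw [pr01] at this; simp only [] at this
    linear_combination this - p 0 1 * p32
  have u2 : ℓ 0 2 ^ 2 - p 0 2 * p 1 3 = 1 := by
    have := hunit 0 2; rw [pr02] at this; simp only [] at this
    linear_combination this - p 0 2 * p31
  have u3 : ℓ 0 3 ^ 2 - p 0 3 * p 1 2 = 1 := by
    have := hunit 0 3; rw [pr03] at this; simp only [] at this
    linear_combination this - p 0 3 * p21
  intro μ ν α β
  fin_cases μ <;> fin_cases ν <;> fin_cases α <;> fin_cases β <;>
    simp only [Fin.isValue, Fin.zero_eta, Fin.mk_one,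
      pr00, pr01, pr02, pr03, pr10, pr11, pr12, pr13,
      pr20, pr21, pr22, pr23, pr30, pr31, pr32, pr33,
      smul_eq_mul, Fin.reduceFinMk, Fin.reduceEq, reduceIte, if_true, if_false,
      mul_one, mul_zero, zero_mul, one_mul, add_zero, zero_add,
      h1, pii, p10, p20, p30, p21, p31, p32, l10, l20, l30, l21, l31, l32, l23, l13, l12,
      l00, l11, l22, l33] <;>
    first
      | ring1
      | linear_combination u1
      | linear_combination u2
      | linear_combination u3
      | linear_combination -u1
      | linear_combination -u2
      | linear_combination -u3


end Aux

/-- coproduct and counit are well defined on `M_{ℓ,p}`: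
(1) if `M` and `N` satisfy the `M_{ℓ,p}`-relations then so does
`P_{μν} := Σ_α M_{μα} ⊗ N_{αν}` in `A ⊗[k] B`;
(2) the scalar family `E_{μν} := δ_{μν}` in `k` satisfies the `M_{ℓ,p}`-relations. -/
theorem stmt18 {k : Type*} [Field k] [CharZero k]
    (ℓ p : Fin 4 → Fin 4 → k) (hlp : GoodParams ℓ p) :
    (∀ (A B : Type*) [Ring A] [Algebra k A] [Ring B] [Algebra k B],
      ∀ (M : Fin 4 → Fin 4 → A) (N : Fin 4 → Fin 4 → B),
        MlpRel ℓ p M → MlpRel ℓ p N →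
        MlpRel ℓ p (fun μ ν => ∑ α : Fin 4, M μ α ⊗ₜ[k] N α ν)) ∧
    MlpRel ℓ p (fun μ ν : Fin 4 => if μ = ν then (1 : k) else 0) :=
  ⟨fun A B _ _ _ _ M N hM hN => part1 ℓ p hlp M N hM hN, part2 ℓ p hlp⟩
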